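/- arXiv:2503.15804 — 2 statements merged into one kernel-verified Lean document; each statement's English description precedes it below -/
import Mathlib

section
/- Fix a matrix D̄ ∈ ℝ^{N×n}, an integer τ ≥ 1, and a real α > 0 with ταL ≤ 2. Let Y : ℕ → ℝ^{N×n} satisfy Y(s+1) = Y(s) − α∇F(Y(s)) − αD̄ for all s ≥ 0. Then for every integer s ≥ 0: ‖Y(s) − X*‖ ≤ (1 + 2/τ)^s‖Y(0) − X*‖ + (τ/2)((1 + 2/τ)^s − 1)·α‖D̄ − D*‖. -/
open Matrix
set_option linter.unusedVariables false

noncomputable def Jmat (N : ℕ) : Matrix (Fin N) (Fin N) ℝ :=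
  Matrix.of fun _ _ => (N : ℝ)⁻¹

noncomputable def gradF {N n : ℕ}
    (g : Fin N → EuclideanSpace ℝ (Fin n) → EuclideanSpace ℝ (Fin n))
    (X : Matrix (Fin N) (Fin n) ℝ) : Matrix (Fin N) (Fin n) ℝ :=
  Matrix.of fun i => (WithLp.equiv 2 (Fin n → ℝ))
    (g i ((WithLp.equiv 2 (Fin n → ℝ)).symm (X i)))

/-- Squared weighted norm `‖A‖_Q² = tr(AᵀQA)`. -/
noncomputable def nsqQ {N n : ℕ} (Q : Matrix (Fin N) (Fin N) ℝ)
    (A : Matrix (Fin N) (Fin n) ℝ) : ℝ :=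
  Matrix.trace (Aᵀ * Q * A)

/-- Squared Frobenius norm `‖A‖² = tr(AᵀA)`. -/
noncomputable def frobSq {N n : ℕ} (A : Matrix (Fin N) (Fin n) ℝ) : ℝ :=
  Matrix.trace (Aᵀ * A)

/-- Frobenius norm `‖A‖ = √tr(AᵀA)`. -/
noncomputable def fnorm {N n : ℕ} (A : Matrix (Fin N) (Fin n) ℝ) : ℝ :=
  Real.sqrt (Matrix.trace (Aᵀ * A))

/-! Each row of `X ↦ X - α • ∇F(X)` is `(1 + αL)`-Lipschitz and `ταL ≤ 2`, so, as
`D* = -∇F(X*)`, the error `e s = ‖Y s - X*‖` obeys `e (s+1) ≤ (1 + 2/τ) e s + α‖D̄ - D*‖`.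
Unrolling this linear recurrence produces the geometric sum
`∑_{k<s} (1 + 2/τ)^k = (τ/2)((1 + 2/τ)^s - 1)`. -/

attribute [local instance] Matrix.frobeniusNormedAddCommGroup Matrix.frobeniusNormedSpace

open Finset WithLp

section Frobenius

variable {m n α : Type*} [Fintype m] [Fintype n] [NormedAddCommGroup α]

theorem Matrix.frobenius_norm_eq_sqrt_sum_row_norm_sq (A : Matrix m n α) :
    ‖A‖ = √(∑ i, ‖toLp 2 (A i)‖ ^ 2) :=
  PiLp.norm_eq_of_L2 (toLp 2 fun i => toLp 2 (A i))

theorem Matrix.frobenius_norm_le_of_row_norm_le {A B : Matrix m n α} {c : ℝ}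
    (h : ∀ i, ‖toLp 2 (A i)‖ ≤ c * ‖toLp 2 (B i)‖) : ‖A‖ ≤ c * ‖B‖ := by
  rcases le_or_gt 0 c with hc | hc
  · rw [frobenius_norm_eq_sqrt_sum_row_norm_sq, frobenius_norm_eq_sqrt_sum_row_norm_sq,
      ← Real.sqrt_sq hc, ← Real.sqrt_mul (sq_nonneg c), mul_sum]
    gcongr with i
    rw [← mul_pow]
    exact pow_le_pow_left₀ (norm_nonneg _) (h i) 2
  · have hB : ∀ i, ‖toLp 2 (B i)‖ = 0 := fun i =>
      le_antisymm (by nlinarith [h i, norm_nonneg (toLp 2 (A i))]) (norm_nonneg _)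
    have hA : ∀ i, ‖toLp 2 (A i)‖ = 0 := fun i =>
      le_antisymm (by simpa [hB i] using h i) (norm_nonneg _)
    simp [frobenius_norm_eq_sqrt_sum_row_norm_sq, hA, hB]

end Frobenius

theorem fnorm_eq_norm {N n : ℕ} (A : Matrix (Fin N) (Fin n) ℝ) : fnorm A = ‖A‖ := by
  rw [fnorm, frobenius_norm_eq_sqrt_sum_row_norm_sq]
  congr 1
  simp only [trace, Matrix.diag, transpose_apply, mul_apply, EuclideanSpace.norm_sq_eq,
    Real.norm_eq_abs, sq_abs, ← sq]
  exact sum_comm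

theorem norm_gradF_sub_le {N n : ℕ} {L : ℝ}
    {g : Fin N → EuclideanSpace ℝ (Fin n) → EuclideanSpace ℝ (Fin n)}
    (hg : ∀ i x y, ‖g i x - g i y‖ ≤ L * ‖x - y‖) (X Z : Matrix (Fin N) (Fin n) ℝ) :
    ‖gradF g X - gradF g Z‖ ≤ L * ‖X - Z‖ :=
  frobenius_norm_le_of_row_norm_le fun i => hg i (toLp 2 (X i)) (toLp 2 (Z i))

theorem norm_gradient_step_sub_le {N n : ℕ} {L a : ℝ}
    {g : Fin N → EuclideanSpace ℝ (Fin n) → EuclideanSpace ℝ (Fin n)}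
    (hg : ∀ i x y, ‖g i x - g i y‖ ≤ L * ‖x - y‖) (ha : 0 ≤ a) (X Z D : Matrix (Fin N) (Fin n) ℝ) :
    ‖X - a • gradF g X - a • D - Z‖ ≤ (1 + a * L) * ‖X - Z‖ + a * ‖D + gradF g Z‖ := by
  have hsplit : X - a • gradF g X - a • D - Z
      = (X - Z) - a • (gradF g X - gradF g Z) - a • (D + gradF g Z) := by module
  calc ‖X - a • gradF g X - a • D - Z‖
      ≤ ‖X - Z‖ + a * ‖gradF g X - gradF g Z‖ + a * ‖D + gradF g Z‖ := by
        rw [hsplit, ← norm_smul_of_nonneg ha, ← norm_smul_of_nonneg ha]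
        exact (norm_sub_le _ _).trans (by gcongr; exact norm_sub_le _ _)
    _ ≤ (1 + a * L) * ‖X - Z‖ + a * ‖D + gradF g Z‖ := by
        nlinarith [norm_gradF_sub_le hg X Z]

theorem le_pow_mul_add_geom_sum_mul {u : ℕ → ℝ} {ρ c : ℝ} (hρ : 0 ≤ ρ)
    (hu : ∀ s, u (s + 1) ≤ ρ * u s + c) (s : ℕ) :
    u s ≤ ρ ^ s * u 0 + (∑ k ∈ range s, ρ ^ k) * c := by
  induction s with
  | zero => simp
  | succ s ih =>
    calc u (s + 1) ≤ ρ * (ρ ^ s * u 0 + (∑ k ∈ range s, ρ ^ k) * c) + c :=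
          (hu s).trans (by gcongr)
      _ = ρ ^ (s + 1) * u 0 + (∑ k ∈ range (s + 1), ρ ^ k) * c := by
          rw [geom_sum_succ]; ring

theorem within_round_growth_bound_general
    {N n : ℕ}
    (L : ℝ)
    (g : Fin N → EuclideanSpace ℝ (Fin n) → EuclideanSpace ℝ (Fin n))
    (hsmooth : ∀ i x y, ‖g i x - g i y‖ ≤ L * ‖x - y‖)
    (Xstar : Matrix (Fin N) (Fin n) ℝ)
    (Dstar : Matrix (Fin N) (Fin n) ℝ) (hDstar : Dstar = - gradF g Xstar)
    (Dbar : Matrix (Fin N) (Fin n) ℝ)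
    (τ : ℕ) (hτ : 1 ≤ τ) (α : ℝ) (hα : 0 < α)
    (hταL : (τ : ℝ) * α * L ≤ 2)
    (Y : ℕ → Matrix (Fin N) (Fin n) ℝ)
    (hY : ∀ s : ℕ, Y (s + 1) = Y s - α • gradF g (Y s) - α • Dbar) :
    ∀ s : ℕ,
      fnorm (Y s - Xstar)
      ≤ (1 + 2 / (τ : ℝ)) ^ s * fnorm (Y 0 - Xstar)
        + ((τ : ℝ) / 2) * ((1 + 2 / (τ : ℝ)) ^ s - 1) * (α * fnorm (Dbar - Dstar)) := by
  have hτ0 : (0 : ℝ) < τ := by exact_mod_cast hτ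
  have hαL : α * L ≤ 2 / τ := by rw [le_div_iff₀ hτ0]; linarith
  have hstep : ∀ s, fnorm (Y (s + 1) - Xstar)
      ≤ (1 + 2 / τ) * fnorm (Y s - Xstar) + α * fnorm (Dbar - Dstar) := by
    intro s
    simp only [fnorm_eq_norm, hY, hDstar, sub_neg_eq_add]
    refine (norm_gradient_step_sub_le hsmooth hα.le _ _ _).trans ?_
    gcongr
  have hgeom : ∀ s, ∑ k ∈ range s, (1 + 2 / (τ : ℝ)) ^ k
      = (τ / 2) * ((1 + 2 / τ) ^ s - 1) := fun s => by
    rw [geom_sum_eq (ne_of_gt (lt_add_of_pos_right 1 (by positivity)))]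
    field_simp
    ring
  intro s
  simpa only [hgeom, mul_assoc] using
    le_pow_mul_add_geom_sum_mul (u := fun s => fnorm (Y s - Xstar)) (by positivity) hstep s

/-- growth bound for the within-round iteration
`Y(s+1) = Y(s) − α∇F(Y(s)) − αD̄`. -/
theorem within_round_growth_bound
    {N n : ℕ} (hN : 1 ≤ N) (hn : 1 ≤ n)
    (L μ : ℝ) (hμ : 0 < μ) (hLμ : μ ≤ L)
    (f : Fin N → EuclideanSpace ℝ (Fin n) → ℝ)
    (g : Fin N → EuclideanSpace ℝ (Fin n) → EuclideanSpace ℝ (Fin n))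
    (hdiff : ∀ i, Differentiable ℝ (f i))
    (hgrad : ∀ i x, HasGradientAt (f i) (g i x) x)
    (hsmooth : ∀ i x y, ‖g i x - g i y‖ ≤ L * ‖x - y‖)
    (hsc : ∀ i x y, μ * ‖x - y‖ ^ 2 ≤ (inner ℝ (g i x - g i y) (x - y) : ℝ))
    (xstar : EuclideanSpace ℝ (Fin n))
    (hxstar : ∀ y : EuclideanSpace ℝ (Fin n),
      (N : ℝ)⁻¹ * ∑ i : Fin N, f i xstar ≤ (N : ℝ)⁻¹ * ∑ i : Fin N, f i y)
    (Xstar : Matrix (Fin N) (Fin n) ℝ)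
    (hXstar : ∀ i : Fin N, Xstar i = (WithLp.equiv 2 (Fin n → ℝ)) xstar)
    (Dstar : Matrix (Fin N) (Fin n) ℝ) (hDstar : Dstar = - gradF g Xstar)
    (Dbar : Matrix (Fin N) (Fin n) ℝ)
    (τ : ℕ) (hτ : 1 ≤ τ) (α : ℝ) (hα : 0 < α)
    (hταL : (τ : ℝ) * α * L ≤ 2)
    (Y : ℕ → Matrix (Fin N) (Fin n) ℝ)
    (hY : ∀ s : ℕ, Y (s + 1) = Y s - α • gradF g (Y s) - α • Dbar) :
    ∀ s : ℕ,
      fnorm (Y s - Xstar)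
      ≤ (1 + 2 / (τ : ℝ)) ^ s * fnorm (Y 0 - Xstar)
        + ((τ : ℝ) / 2) * ((1 + 2 / (τ : ℝ)) ^ s - 1) * (α * fnorm (Dbar - Dstar)) :=
  within_round_growth_bound_general L g hsmooth Xstar Dstar hDstar Dbar τ hτ α hα hταL Y hY
end

section
/- Assume JD(0) = 0. Then for every integer k ≥ 0 the FedCET iterates satisfy the identity ⟨D(τk+τ) − D*, X(τk+τ) − X*⟩ = ⟨D(τk+τ) − D*, D(τk+τ) − D(τk)⟩_M, where ⟨A, B⟩ = tr(AᵀB) and M = c⁻¹(I − J) − αI. -/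
/-! The dual iterate `D` stays in the range of `I - J`, it only moves at communication rounds,
and over the round ending at `τk + τ` its increment is `c (I - J) Y` while the primal iterate
ends at `Y - α (D(τk+τ) - D(τk))`, where `Y` is the local update before the dual correction.
Pairing `A = D(τk+τ) - D*` (again in the range of `I - J`, by first-order optimality of `x̄*`)
against this, the projection `I - J` disappears, `A` is orthogonal to the consensus matrix `X*`,
and both sides reduce to `⟨A, Y⟩ - α ⟨A, D(τk+τ) - D(τk)⟩`. -/

open Matrix
set_option linter.unusedVariables false

section Optimality

variable {F : Type*} [NormedAddCommGroup F] [InnerProductSpace ℝ F] [CompleteSpace F]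

theorem sum_gradient_eq_zero_of_isLocalMin {ι : Type*} (s : Finset ι) {f : ι → F → ℝ}
    {g : ι → F} {x : F} (hmin : IsLocalMin (fun y => ∑ i ∈ s, f i y) x)
    (hg : ∀ i ∈ s, HasGradientAt (f i) (g i) x) : ∑ i ∈ s, g i = 0 := by
  have hderiv : HasFDerivAt (fun y => ∑ i ∈ s, f i y)
      (InnerProductSpace.toDual ℝ F (∑ i ∈ s, g i)) x := by
    rw [map_sum]
    exact HasFDerivAt.fun_sum fun i hi => (hg i hi).hasFDerivAt
  exact (InnerProductSpace.toDual ℝ F).map_eq_zero_iff.mp (hmin.hasFDerivAt_eq_zero hderiv)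

end Optimality

section AveragingMatrix

variable {N m : ℕ}

theorem Jmat_transpose : (Jmat N)ᵀ = Jmat N := rfl

theorem Jmat_mul_apply (A : Matrix (Fin N) (Fin m) ℝ) (i : Fin N) (j : Fin m) :
    (Jmat N * A) i j = (N : ℝ)⁻¹ * ∑ l, A l j := by
  simp [Jmat, mul_apply, Finset.mul_sum]

theorem Jmat_mul_of_forall_row_eq (hN : N ≠ 0) {A : Matrix (Fin N) (Fin m) ℝ}
    (v : Fin m → ℝ) (hA : ∀ i, A i = v) : Jmat N * A = A := by
  ext i j
  simp [Jmat_mul_apply, hA, hN]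

theorem Jmat_mul_self (hN : N ≠ 0) : Jmat N * Jmat N = Jmat N :=
  Jmat_mul_of_forall_row_eq hN _ fun _ => rfl

theorem Jmat_mul_gradF_eq_zero {g : Fin N → EuclideanSpace ℝ (Fin m) → EuclideanSpace ℝ (Fin m)}
    {x : EuclideanSpace ℝ (Fin m)} (hg : ∑ i, g i x = 0) {X : Matrix (Fin N) (Fin m) ℝ}
    (hX : ∀ i, X i = WithLp.equiv 2 (Fin m → ℝ) x) : Jmat N * gradF g X = 0 := by
  ext i j
  have hgj : ∑ l, g l x j = 0 := by
    simpa using congrArg (fun v : EuclideanSpace ℝ (Fin m) => v j) hg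
  simp [Jmat_mul_apply, gradF, hX, hgj]

end AveragingMatrix

section FedCET

variable {K : Type*} [Field K] {m n : Type*} [Fintype m] [DecidableEq m]

/-- The FedCET recursion, with `W(t+1)` written out as `if τ ∣ t + 1 then J else 1` and `G`
in the role of `∇F`. -/
def IsFedCETTrajectory (J : Matrix m m K) (τ : ℕ) (α c : K)
    (G : Matrix m n K → Matrix m n K) (X D : ℕ → Matrix m n K) : Prop :=
  ∀ t : ℕ,
    D (t + 1) = D t + c • ((1 - (if τ ∣ (t + 1) then J else 1)) * (X t - α • G (X t) - α • D t)) ∧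
    X (t + 1) = X t - α • G (X t) - α • D (t + 1)

namespace IsFedCETTrajectory

variable {J : Matrix m m K} {τ : ℕ} {α c : K} {G : Matrix m n K → Matrix m n K}
  {X D : ℕ → Matrix m n K}

theorem mul_D_eq_zero (h : IsFedCETTrajectory J τ α c G X D) (hJ : J * J = J)
    (hD0 : J * D 0 = 0) (t : ℕ) : J * D t = 0 := by
  induction t with
  | zero => exact hD0
  | succ t ih =>
    rw [(h t).1, Matrix.mul_add, ih, zero_add, Matrix.mul_smul, ← Matrix.mul_assoc]
    split_ifs <;> simp [Matrix.mul_sub, hJ]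

theorem D_mul_add_of_lt (h : IsFedCETTrajectory J τ α c G X D) (k : ℕ) {r : ℕ} (hr : r < τ) :
    D (τ * k + r) = D (τ * k) := by
  induction r with
  | zero => rfl
  | succ r ih =>
    have hndvd : ¬ τ ∣ τ * k + r + 1 := by
      rw [add_assoc, Nat.dvd_add_right (dvd_mul_right τ k)]
      exact Nat.not_dvd_of_pos_of_lt r.succ_pos hr
    rw [← add_assoc, (h _).1, if_neg hndvd, sub_self, Matrix.zero_mul, smul_zero, add_zero]
    exact ih (by omega)

theorem exists_round_increment (h : IsFedCETTrajectory J τ α c G X D) (hτ : 1 ≤ τ) (k : ℕ) :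
    ∃ Y, D (τ * k + τ) - D (τ * k) = c • ((1 - J) * Y) ∧
      X (τ * k + τ) = Y - α • (D (τ * k + τ) - D (τ * k)) := by
  obtain ⟨t, ht⟩ : ∃ t, τ * k + τ = τ * k + t + 1 := ⟨τ - 1, by omega⟩
  have hDt : D (τ * k + t) = D (τ * k) := h.D_mul_add_of_lt k (by omega)
  have hdvd : τ ∣ τ * k + t + 1 := ht ▸ ⟨k + 1, by ring⟩
  refine ⟨X (τ * k + t) - α • G (X (τ * k + t)) - α • D (τ * k), ?_, ?_⟩
  · rw [ht, (h _).1, if_pos hdvd, hDt, add_sub_cancel_left]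
  · rw [ht, (h _).2, ← hDt, smul_sub]
    abel

end IsFedCETTrajectory

theorem transpose_mul_round_eq {J : Matrix m m K} (hJ : Jᵀ = J) {A Y Xs Δ : Matrix m n K}
    (hA : J * A = 0) (hXs : J * Xs = Xs) {α c : K} (hc : c ≠ 0)
    (hΔ : Δ = c • ((1 - J) * Y)) :
    Aᵀ * (Y - α • Δ - Xs) = Aᵀ * (c⁻¹ • (1 - J) - α • 1) * Δ := by
  have hAJ : Aᵀ * J = 0 := by rw [← hJ, ← transpose_mul, hA, transpose_zero]
  have hAP : Aᵀ * (1 - J) = Aᵀ := by rw [Matrix.mul_sub, Matrix.mul_one, hAJ, sub_zero]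
  have hAXs : Aᵀ * Xs = 0 := by rw [← hXs, ← Matrix.mul_assoc, hAJ, Matrix.zero_mul]
  have hAΔ : Aᵀ * Δ = c • (Aᵀ * Y) := by rw [hΔ, Matrix.mul_smul, ← Matrix.mul_assoc, hAP]
  calc Aᵀ * (Y - α • Δ - Xs) = Aᵀ * Y - α • (Aᵀ * Δ) := by
        rw [Matrix.mul_sub, Matrix.mul_sub, hAXs, Matrix.mul_smul, sub_zero]
    _ = c⁻¹ • (Aᵀ * Δ) - α • (Aᵀ * Δ) := by
        rw [hAΔ, smul_smul c⁻¹, inv_mul_cancel₀ hc, one_smul]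
    _ = Aᵀ * (c⁻¹ • (1 - J) - α • 1) * Δ := by
        rw [Matrix.mul_sub, Matrix.mul_smul, Matrix.mul_smul, hAP, Matrix.mul_one,
          Matrix.sub_mul, Matrix.smul_mul, Matrix.smul_mul]

end FedCET

theorem fedcet_trace_identity_general
    {N n : ℕ} (hN : 1 ≤ N)
    (f : Fin N → EuclideanSpace ℝ (Fin n) → ℝ)
    (g : Fin N → EuclideanSpace ℝ (Fin n) → EuclideanSpace ℝ (Fin n))
    (hgrad : ∀ i x, HasGradientAt (f i) (g i x) x)
    (τ : ℕ) (hτ : 1 ≤ τ) (α c : ℝ) (hc : 0 < c)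
    (X D : ℕ → Matrix (Fin N) (Fin n) ℝ)
    (hiter : ∀ t : ℕ,
      D (t + 1) = D t
          + c • (((1 : Matrix (Fin N) (Fin N) ℝ)
              - (if τ ∣ (t + 1) then Jmat N else 1)) *
            (X t - α • gradF g (X t) - α • D t)) ∧
      X (t + 1) = X t - α • gradF g (X t) - α • D (t + 1))
    (hD0 : Jmat N * D 0 = 0)
    (xstar : EuclideanSpace ℝ (Fin n))
    (hxstar : ∀ y : EuclideanSpace ℝ (Fin n),
      (N : ℝ)⁻¹ * ∑ i : Fin N, f i xstar ≤ (N : ℝ)⁻¹ * ∑ i : Fin N, f i y)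
    (Xstar : Matrix (Fin N) (Fin n) ℝ)
    (hXstar : ∀ i : Fin N, Xstar i = (WithLp.equiv 2 (Fin n → ℝ)) xstar)
    (Dstar : Matrix (Fin N) (Fin n) ℝ) (hDstar : Dstar = - gradF g Xstar)
    (M : Matrix (Fin N) (Fin N) ℝ)
    (hM : M = c⁻¹ • ((1 : Matrix (Fin N) (Fin N) ℝ) - Jmat N) - α • 1) :
    ∀ k : ℕ,
      Matrix.trace ((D (τ * k + τ) - Dstar)ᵀ * (X (τ * k + τ) - Xstar))
      = Matrix.trace ((D (τ * k + τ) - Dstar)ᵀ * M * (D (τ * k + τ) - D (τ * k))) := by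
  intro k
  have htraj : IsFedCETTrajectory (Jmat N) τ α c (gradF g) X D := hiter
  have hN0 : N ≠ 0 := by omega
  have hmin : IsLocalMin (fun y => ∑ i, f i y) xstar := Filter.Eventually.of_forall fun y =>
    le_of_mul_le_mul_left (hxstar y) (inv_pos.mpr (Nat.cast_pos.mpr hN))
  have hJDstar : Jmat N * Dstar = 0 := by
    rw [hDstar, Matrix.mul_neg, Jmat_mul_gradF_eq_zero
      (sum_gradient_eq_zero_of_isLocalMin _ hmin fun i _ => hgrad i xstar) hXstar, neg_zero]
  have hJA : Jmat N * (D (τ * k + τ) - Dstar) = 0 := by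
    rw [Matrix.mul_sub, htraj.mul_D_eq_zero (Jmat_mul_self hN0) hD0, hJDstar, sub_self]
  obtain ⟨Y, hΔ, hX⟩ := htraj.exists_round_increment hτ k
  rw [hX, hM]
  exact congrArg trace (transpose_mul_round_eq Jmat_transpose hJA
    (Jmat_mul_of_forall_row_eq hN0 _ hXstar) hc.ne' hΔ)

/-- the trace identity
`⟨D(τk+τ) − D*, X(τk+τ) − X*⟩ = ⟨D(τk+τ) − D*, D(τk+τ) − D(τk)⟩_M`. -/
theorem fedcet_trace_identity
    {N n : ℕ} (hN : 1 ≤ N) (hn : 1 ≤ n)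
    (L μ : ℝ) (hμ : 0 < μ) (hLμ : μ ≤ L)
    (f : Fin N → EuclideanSpace ℝ (Fin n) → ℝ)
    (g : Fin N → EuclideanSpace ℝ (Fin n) → EuclideanSpace ℝ (Fin n))
    (hdiff : ∀ i, Differentiable ℝ (f i))
    (hgrad : ∀ i x, HasGradientAt (f i) (g i x) x)
    (hsmooth : ∀ i x y, ‖g i x - g i y‖ ≤ L * ‖x - y‖)
    (hsc : ∀ i x y, μ * ‖x - y‖ ^ 2 ≤ (inner ℝ (g i x - g i y) (x - y) : ℝ))
    (τ : ℕ) (hτ : 1 ≤ τ) (α c : ℝ) (hα : 0 < α) (hc : 0 < c)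
    (X D : ℕ → Matrix (Fin N) (Fin n) ℝ)
    (hiter : ∀ t : ℕ,
      D (t + 1) = D t
          + c • (((1 : Matrix (Fin N) (Fin N) ℝ)
              - (if τ ∣ (t + 1) then Jmat N else 1)) *
            (X t - α • gradF g (X t) - α • D t)) ∧
      X (t + 1) = X t - α • gradF g (X t) - α • D (t + 1))
    (hD0 : Jmat N * D 0 = 0)
    (xstar : EuclideanSpace ℝ (Fin n))
    (hxstar : ∀ y : EuclideanSpace ℝ (Fin n),
      (N : ℝ)⁻¹ * ∑ i : Fin N, f i xstar ≤ (N : ℝ)⁻¹ * ∑ i : Fin N, f i y)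
    (Xstar : Matrix (Fin N) (Fin n) ℝ)
    (hXstar : ∀ i : Fin N, Xstar i = (WithLp.equiv 2 (Fin n → ℝ)) xstar)
    (Dstar : Matrix (Fin N) (Fin n) ℝ) (hDstar : Dstar = - gradF g Xstar)
    (M : Matrix (Fin N) (Fin N) ℝ)
    (hM : M = c⁻¹ • ((1 : Matrix (Fin N) (Fin N) ℝ) - Jmat N) - α • 1) :
    ∀ k : ℕ,
      Matrix.trace ((D (τ * k + τ) - Dstar)ᵀ * (X (τ * k + τ) - Xstar))
      = Matrix.trace ((D (τ * k + τ) - Dstar)ᵀ * M * (D (τ * k + τ) - D (τ * k))) :=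
  fedcet_trace_identity_general hN f g hgrad τ hτ α c hc X D hiter hD0 xstar hxstar Xstar hXstar
    Dstar hDstar M hM
end
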